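/- arXiv:2211.05413 — 6 statements merged into one kernel-verified Lean document; each statement's English description precedes it below -/
import Mathlib

section
/- Fix n ≥ 1 and i in [n]. Define strings c_1, ..., c_{2^n} in {0,1}^n by c_1 = 0^n, and for j ≥ 2, c_j is obtained from c_{j-1} by flipping bit h_{ij}, where h_{ij} = ((ζ(j-1) + i - 2) mod n) + 1 with ζ(0) := 0 and ζ the ruler function. Then c_1, c_2, ..., c_{2^n} are pairwise distinct (hence enumerate all of {0,1}^n). -/
/-!
Bit `q` of `c j'` differs from bit `q` of `c j` by the parity of the number of `m ∈ [j, j')`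
whose flip position is `q`. The flip position of `m` is a function of the 2-adic valuation of
`m`, injective on `m < 2 ^ n`, and every interval `[j, j')` with `j ≥ 1` contains exactly one
element of maximal 2-adic valuation (two such elements would have a multiple of a higher power
of 2 between them). So that element's position is flipped exactly once and `c j ≠ c j'`.
-/

open Finset

theorem ruler_eq_padicValNat_add_one {m z : ℕ} (hm : m ≠ 0)
    (hz : IsGreatest {k : ℕ | 2 ^ (k - 1) ∣ m} z) : z = padicValNat 2 m + 1 := by
  obtain ⟨hdvd, hmax⟩ := hz
  have hge : padicValNat 2 m + 1 ≤ z :=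
    hmax (by simpa using pow_padicValNat_dvd (p := 2) (n := m))
  have hle : z - 1 ≤ padicValNat 2 m := (padicValNat_dvd_iff_le hm).mp hdvd
  omega

theorem padicValNat_two_lt_of_lt_two_pow {m n : ℕ} (hm : m ≠ 0) (hmn : m < 2 ^ n) :
    padicValNat 2 m < n :=
  (Nat.pow_lt_pow_iff_right (by norm_num)).mp
    ((Nat.le_of_dvd (Nat.pos_of_ne_zero hm) pow_padicValNat_dvd).trans_lt hmn)

theorem exists_padicValNat_two_gt_of_lt {a b : ℕ} (ha : a ≠ 0) (hab : a < b)
    (hv : padicValNat 2 a = padicValNat 2 b) :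
    ∃ x, a < x ∧ x ≤ b ∧ padicValNat 2 a < padicValNat 2 x := by
  set k := padicValNat 2 a
  obtain ⟨q, hq⟩ : 2 ^ k ∣ a := pow_padicValNat_dvd
  have hb : 2 ^ k ∣ b := hv ▸ pow_padicValNat_dvd
  have hodd : ¬ 2 ∣ q := fun ⟨t, ht⟩ => pow_succ_padicValNat_not_dvd (p := 2) ha <|
    show 2 ^ (k + 1) ∣ a from ⟨t, by rw [hq, ht, pow_succ, mul_assoc]⟩
  have hpos : 0 < 2 ^ k := by positivity
  refine ⟨a + 2 ^ k, by omega, ?_, ?_⟩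
  · have := Nat.le_of_dvd (by omega) (Nat.dvd_sub hb (hq ▸ dvd_mul_right _ _))
    omega
  · obtain ⟨t, ht⟩ : 2 ∣ q + 1 := by omega
    have hdvd : 2 ^ (k + 1) ∣ a + 2 ^ k :=
      ⟨t, by rw [hq, ← mul_add_one, ht, pow_succ, mul_assoc]⟩
    have := (padicValNat_dvd_iff_le (by omega)).mp hdvd
    omega

theorem exists_unique_max_padicValNat_two_Ico {a b : ℕ} (ha : a ≠ 0) (hab : a < b) :
    ∃ m₀ ∈ Ico a b, ∀ m ∈ Ico a b, m ≠ m₀ → padicValNat 2 m < padicValNat 2 m₀ := by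
  obtain ⟨m₀, hm₀, hmax⟩ := exists_max_image (Ico a b) (padicValNat 2) ⟨a, by simp [hab]⟩
  refine ⟨m₀, hm₀, fun m hm hne => (hmax m hm).lt_of_ne fun hv => ?_⟩
  rw [mem_Ico] at hm hm₀
  rcases hne.lt_or_gt with hlt | hlt
  · obtain ⟨x, hmx, hxm₀, hvx⟩ := exists_padicValNat_two_gt_of_lt (by omega) hlt hv
    have := hmax x (mem_Ico.mpr ⟨by omega, by omega⟩)
    omega
  · obtain ⟨x, hm₀x, hxm, hvx⟩ := exists_padicValNat_two_gt_of_lt (by omega) hlt hv.symm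
    have := hmax x (mem_Ico.mpr ⟨by omega, by omega⟩)
    omega

section Flips

variable {α : Type*} [DecidableEq α] (c : ℕ → α → ZMod 2) (f : ℕ → α) {j j' : ℕ}

theorem apply_eq_add_card_filter_of_flips (hjj' : j ≤ j')
    (hstep : ∀ m, j ≤ m → m < j' → c (m + 1) = Function.update (c m) (f m) (c m (f m) + 1))
    (q : α) :
    c j' q = c j q + #{m ∈ Ico j j' | f m = q} := by
  induction j', hjj' using Nat.le_induction with
  | base => simp
  | succ k hjk ih =>
    replace ih := ih fun m hm hmk => hstep m hm (hmk.trans k.lt_succ_self)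
    rw [hstep k hjk k.lt_succ_self, Nat.Ico_succ_right_eq_insert_Ico hjk, filter_insert]
    by_cases hq : f k = q
    · subst hq
      rw [if_pos rfl, card_insert_of_notMem (by simp), Function.update_self, ih]
      push_cast; ring
    · rw [if_neg hq, Function.update_of_ne (Ne.symm hq), ih]

theorem ne_of_unique_flip {m₀ : ℕ} (hjj' : j ≤ j')
    (hstep : ∀ m, j ≤ m → m < j' → c (m + 1) = Function.update (c m) (f m) (c m (f m) + 1))
    (hm₀ : m₀ ∈ Ico j j') (huniq : ∀ m ∈ Ico j j', f m = f m₀ → m = m₀) : c j ≠ c j' := by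
  intro hc
  have hsingle : {m ∈ Ico j j' | f m = f m₀} = {m₀} := by
    ext m
    simp only [mem_filter, mem_singleton]
    exact ⟨fun ⟨hm, hfm⟩ => huniq m hm hfm, by rintro rfl; exact ⟨hm₀, rfl⟩⟩
  have := apply_eq_add_card_filter_of_flips c f hjj' hstep (f m₀)
  rw [hsingle, hc] at this
  simp at this

end Flips

theorem Int.eq_of_toNat_add_emod_eq (a : ℤ) {n v w : ℕ} (hv : v < n) (hw : w < n)
    (h : ((a + v) % n).toNat = ((a + w) % n).toNat) : v = w := by
  have hn : (n : ℤ) ≠ 0 := by omega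
  have hmod : (a + v) % n = (a + w) % n := by
    have := Int.emod_nonneg (a + v) hn
    have := Int.emod_nonneg (a + w) hn
    omega
  have : (v : ℤ) % n = w % n := Int.ModEq.add_left_cancel' a hmod
  rw [Int.emod_eq_of_lt (by omega) (by omega), Int.emod_eq_of_lt (by omega) (by omega)] at this
  omega

theorem stmt1_general (n : ℕ) (i : ℕ) (ζ : ℕ → ℕ)
    (hζ : ∀ m : ℕ, 1 ≤ m → IsGreatest {k : ℕ | 2 ^ (k - 1) ∣ m} (ζ m))
    (c : ℕ → ℕ → ZMod 2)
    (hstep : ∀ j : ℕ, 2 ≤ j → j ≤ 2 ^ n →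
      c j = Function.update (c (j - 1))
        ((((ζ (j - 1) : ℤ) + (i : ℤ) - 2) % (n : ℤ)).toNat + 1)
        (c (j - 1) ((((ζ (j - 1) : ℤ) + (i : ℤ) - 2) % (n : ℤ)).toNat + 1) + 1)) :
    ∀ j ∈ Finset.Icc 1 (2 ^ n), ∀ j' ∈ Finset.Icc 1 (2 ^ n), j ≠ j' → c j ≠ c j' := by
  set flip : ℕ → ℕ := fun m => (((ζ m : ℤ) + i - 2) % n).toNat + 1
  have hflip : ∀ m m', m ≠ 0 → m < 2 ^ n → m' ≠ 0 → m' < 2 ^ n → flip m = flip m' →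
      padicValNat 2 m = padicValNat 2 m' := by
    intro m m' hm hmn hm' hm'n heq
    have hshift : ∀ m ≠ 0, (ζ m : ℤ) + i - 2 = (i - 1 : ℤ) + (padicValNat 2 m : ℕ) :=
      fun m hm => by rw [ruler_eq_padicValNat_add_one hm (hζ m (by omega))]; push_cast; ring
    simp only [flip, hshift m hm, hshift m' hm', add_left_inj] at heq
    exact Int.eq_of_toNat_add_emod_eq _ (padicValNat_two_lt_of_lt_two_pow hm hmn)
      (padicValNat_two_lt_of_lt_two_pow hm' hm'n) heq
  have hne : ∀ j j', 1 ≤ j → j < j' → j' ≤ 2 ^ n → c j ≠ c j' := by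
    intro j j' hj hjj' hj'
    obtain ⟨m₀, hm₀, hmax⟩ := exists_unique_max_padicValNat_two_Ico (by omega) hjj'
    refine ne_of_unique_flip c flip hjj'.le (fun m hjm hmj' => ?_) hm₀ fun m hm hfm => ?_
    · simpa using hstep (m + 1) (by omega) (by omega)
    · by_contra hne
      rw [mem_Ico] at hm hm₀
      exact (hmax m (mem_Ico.mpr hm) hne).ne <|
        hflip m m₀ (by omega) (by omega) (by omega) (by omega) hfm
  intro j hj j' hj' hjj'
  rw [mem_Icc] at hj hj'
  rcases hjj'.lt_or_gt with h | h
  · exact hne j j' hj.1 h hj'.2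
  · exact (hne j' j hj'.1 h hj.2).symm

/-- Fix `n ≥ 1` and `i ∈ [n]`.  Define strings `c_1, …, c_{2^n}` in `{0,1}^n` by `c_1 = 0^n`
and, for `j ≥ 2`, `c_j` is obtained from `c_{j-1}` by flipping bit
`h_{ij} = ((ζ(j-1) + i - 2) mod n) + 1`, where `ζ` is the ruler function and `ζ(0) := 0`.
Then `c_1, c_2, …, c_{2^n}` are pairwise distinct. -/
theorem stmt1 (n : ℕ) (hn : 1 ≤ n) (i : ℕ) (hi1 : 1 ≤ i) (hin : i ≤ n)
    (ζ : ℕ → ℕ) (hζ0 : ζ 0 = 0)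
    (hζ : ∀ m : ℕ, 1 ≤ m → IsGreatest {k : ℕ | 2 ^ (k - 1) ∣ m} (ζ m))
    (c : ℕ → ℕ → ZMod 2) (hc1 : c 1 = fun _ => 0)
    (hstep : ∀ j : ℕ, 2 ≤ j → j ≤ 2 ^ n →
      c j = Function.update (c (j - 1))
        ((((ζ (j - 1) : ℤ) + (i : ℤ) - 2) % (n : ℤ)).toNat + 1)
        (c (j - 1) ((((ζ (j - 1) : ℤ) + (i : ℤ) - 2) % (n : ℤ)).toNat + 1) + 1)) :
    ∀ j ∈ Finset.Icc 1 (2 ^ n), ∀ j' ∈ Finset.Icc 1 (2 ^ n), j ≠ j' → c j ≠ c j' :=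
  stmt1_general n i ζ hζ c hstep
end

section
/- Let G = (V, E) be a finite graph with vertex expansion h_out(G) = h > 0, and let S ⊂ V with 0 < |S| < |V|/2. Consider the bipartite graph B on S ∪ ∂_out(S) whose edges are the edges of G between S and ∂_out(S). Then every maximal matching of B has size at least (h/(h+2))·|S|. -/
/-- Let `G` be a finite graph with vertex expansion at least `h > 0`, and let `S` be a set
of vertices with `0 < |S| < |V|/2`.  In the bipartite graph `B` on `S ∪ ∂_out(S)` whose
edges are the edges of `G` between `S` and `∂_out(S)`, every maximal matching has size at
least `(h/(h+2))·|S|`. -/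
theorem stmt3 {V : Type*} [Fintype V] [DecidableEq V] (G : SimpleGraph V)
    [DecidableRel G.Adj] (h : ℝ) (hpos : 0 < h)
    (hexp : ∀ S : Finset V, 0 < S.card → (S.card : ℝ) < (Fintype.card V : ℝ) / 2 →
      h * S.card ≤ ((Finset.univ.filter fun v => v ∉ S ∧ ∃ u ∈ S, G.Adj u v).card : ℝ))
    (S : Finset V) (hS0 : 0 < S.card) (hS : (S.card : ℝ) < (Fintype.card V : ℝ) / 2)
    (M : Finset (V × V))
    (hM : ∀ p ∈ M, p.1 ∈ S ∧ p.2 ∉ S ∧ G.Adj p.1 p.2)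
    (hMinj : ∀ p ∈ M, ∀ q ∈ M, p ≠ q → p.1 ≠ q.1 ∧ p.2 ≠ q.2)
    (hMax : ∀ u ∈ S, ∀ v : V, v ∉ S → G.Adj u v →
      (∃ p ∈ M, p.1 = u) ∨ (∃ p ∈ M, p.2 = v)) :
    h / (h + 2) * S.card ≤ M.card := by
  have hh2 : (0:ℝ) < h + 2 := by linarith
  set A := M.image Prod.fst with hA
  set B := M.image Prod.snd with hB
  have hAcard : A.card = M.card := by
    apply Finset.card_image_of_injOn
    intro p hp q hq hpq
    by_contra hne
    exact (hMinj p hp q hq hne).1 hpq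
  have hBcard : B.card = M.card := by
    apply Finset.card_image_of_injOn
    intro p hp q hq hpq
    by_contra hne
    exact (hMinj p hp q hq hne).2 hpq
  by_cases hsub : S ⊆ A
  · have : S.card ≤ M.card := hAcard ▸ Finset.card_le_card hsub
    have h1 : h / (h + 2) ≤ 1 := by
      rw [div_le_one hh2]; linarith
    have hSnn : (0:ℝ) ≤ (S.card : ℝ) := Nat.cast_nonneg _
    calc h / (h + 2) * S.card ≤ 1 * S.card := by
          exact mul_le_mul_of_nonneg_right h1 hSnn
      _ = S.card := one_mul _
      _ ≤ M.card := by exact_mod_cast this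
  · -- S' = S \ A nonempty
    set S' := S \ A with hS'
    have hS'pos : 0 < S'.card := by
      rw [Finset.card_pos]
      obtain ⟨x, hx, hxn⟩ := Finset.not_subset.mp hsub
      exact ⟨x, Finset.mem_sdiff.mpr ⟨hx, hxn⟩⟩
    have hS'le : S'.card ≤ S.card := Finset.card_le_card (Finset.sdiff_subset)
    have hS'lt : (S'.card : ℝ) < (Fintype.card V : ℝ) / 2 :=
      lt_of_le_of_lt (by exact_mod_cast hS'le) hS
    have key := hexp S' hS'pos hS'lt
    -- boundary of S' is contained in A ∪ B
    have hsubset : (Finset.univ.filter fun v => v ∉ S' ∧ ∃ u ∈ S', G.Adj u v) ⊆ A ∪ B := by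
      intro v hv
      rw [Finset.mem_filter] at hv
      obtain ⟨-, hvS', u, huS', hadj⟩ := hv
      rw [hS', Finset.mem_sdiff] at huS'
      obtain ⟨huS, huA⟩ := huS'
      by_cases hvS : v ∈ S
      · have : v ∈ A := by
          by_contra hvA
          exact hvS' (Finset.mem_sdiff.mpr ⟨hvS, hvA⟩)
        exact Finset.mem_union_left _ this
      · rcases hMax u huS v hvS hadj with ⟨p, hp, hpu⟩ | ⟨p, hp, hpv⟩
        · exact absurd (Finset.mem_image.mpr ⟨p, hp, hpu⟩) huA
        · exact Finset.mem_union_right _ (Finset.mem_image.mpr ⟨p, hp, hpv⟩)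
    have hbdN : (Finset.univ.filter fun v => v ∉ S' ∧ ∃ u ∈ S', G.Adj u v).card
        ≤ 2 * M.card := by
      have h1 := Finset.card_le_card hsubset
      have h2 := Finset.card_union_le A B
      omega
    have hbd : ((Finset.univ.filter fun v => v ∉ S' ∧ ∃ u ∈ S', G.Adj u v).card : ℝ)
        ≤ 2 * M.card := by exact_mod_cast hbdN
    have hScard : S.card ≤ S'.card + M.card := by
      have h1 := Finset.le_card_sdiff A S
      have h2 : S'.card = (S \ A).card := rfl
      have h3 := Finset.card_le_card (Finset.image_subset_iff.mpr fun p hp => Finset.mem_univ _ : A ⊆ Finset.univ)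
      omega
    have hScardR : (S.card : ℝ) ≤ (S'.card : ℝ) + M.card := by exact_mod_cast hScard
    have hkey2 : h * S'.card ≤ 2 * M.card := le_trans key hbd
    have hmain : h * S.card ≤ (h + 2) * M.card := by
      nlinarith [hkey2, hScardR, hpos.le, Nat.cast_nonneg (α := ℝ) M.card]
    rw [div_mul_eq_mul_div, div_le_iff₀ hh2]
    linarith
end

section
/- Let T be a spanning tree of a connected graph on n vertices, and label the vertices n, n-1, ..., 1 in the reverse order in which they are first visited by a depth-first search traversal of T starting from the root. Let d(i) denote the distance in T between the vertices labelled i and i+1. Then the sum of d(i) for i = 1 to n-1 is at most 2(n-1). -/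
/-!
If a list `L` of vertices is a sublist of the vertex sequence of a walk, the triangle
inequality between consecutive walk vertices bounds the sum of the distances between
consecutive entries of `L` by the length of the walk. The labels `1, …, n`, read upwards, form
a sublist of the vertices of the reversed traversal, and the traversal has length at most
twice the number `n - 1` of edges of the tree.
-/

open Finset

namespace SimpleGraph

variable {V : Type*} (G : SimpleGraph V)

noncomputable def chainDist : List V → ℕ
  | u :: v :: l => G.dist u v + chainDist (v :: l)
  | _ => 0

variable {G}

@[simp] lemma chainDist_nil : G.chainDist [] = 0 := rfl

@[simp] lemma chainDist_singleton (u : V) : G.chainDist [u] = 0 := rfl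

@[simp] lemma chainDist_cons_cons (u v : V) (l : List V) :
    G.chainDist (u :: v :: l) = G.dist u v + G.chainDist (v :: l) := rfl

lemma chainDist_le_chainDist_cons (u : V) (l : List V) :
    G.chainDist l ≤ G.chainDist (u :: l) := by
  cases l with
  | nil => simp
  | cons v l => simp

lemma chainDist_cons_le_of_reachable {u v : V} (h : G.Reachable u v) (l : List V) :
    G.chainDist (u :: l) ≤ G.dist u v + G.chainDist (v :: l) := by
  cases l with
  | nil => simp
  | cons w l =>
    have := h.dist_triangle_left w
    simp only [chainDist_cons_cons]
    omega

lemma chainDist_cons_le_length {u v : V} (q : G.Walk u v) {l : List V}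
    (hl : l.Sublist q.support) : G.chainDist (u :: l) ≤ q.length := by
  induction q generalizing l with
  | nil =>
    rcases List.sublist_singleton.mp hl with rfl | rfl <;> simp
  | @cons u x v hadj q ih =>
    have step : ∀ {l}, l.Sublist q.support → G.chainDist (u :: l) ≤ q.length + 1 := by
      intro l hl
      have htri := chainDist_cons_le_of_reachable hadj.reachable l
      rw [dist_eq_one_iff_adj.mpr hadj] at htri
      have := ih hl
      omega
    rw [Walk.length_cons]
    cases hl with
    | cons _ hl => exact step hl
    | cons_cons _ hl => simpa using step hl

lemma chainDist_le_length {u v : V} (q : G.Walk u v) {l : List V} (hl : l.Sublist q.support) :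
    G.chainDist l ≤ q.length :=
  (chainDist_le_chainDist_cons u l).trans (chainDist_cons_le_length q hl)

lemma chainDist_ofFn {d : ℕ} (g : Fin (d + 1) → V) :
    G.chainDist (List.ofFn g) = ∑ i : Fin d, G.dist (g i.castSucc) (g i.succ) := by
  induction d with
  | zero => simp
  | succ d ih =>
    simp only [Fin.sum_univ_succ, Fin.castSucc_succ, ← ih (fun i => g i.succ)]
    rw [List.ofFn_succ,
      List.ofFn_succ (f := fun i => g i.succ)]
    rfl

lemma Walk.length_le_mul_card_edgeFinset [DecidableEq V] [Fintype G.edgeSet] {u v : V}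
    (p : G.Walk u v) {k : ℕ} (hk : ∀ e, p.edges.count e ≤ k) :
    p.length ≤ k * #G.edgeFinset := by
  have hsub : ∀ e ∈ (p.edges : Multiset (Sym2 V)), e ∈ G.edgeFinset := fun e he =>
    mem_edgeFinset.mpr (p.edges_subset_edgeSet (Multiset.mem_coe.mp he))
  calc p.length = ∑ e ∈ G.edgeFinset, (p.edges : Multiset (Sym2 V)).count e := by
        rw [Multiset.sum_count_eq_card hsub, Multiset.coe_card, Walk.length_edges]
    _ ≤ ∑ _e ∈ G.edgeFinset, k := sum_le_sum fun e _ => by simpa using hk e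
    _ = k * #G.edgeFinset := by rw [sum_const, smul_eq_mul, mul_comm]

end SimpleGraph

open SimpleGraph in
/-- Let `T` be a tree on `d + 1` vertices, and label the vertices `d+1, d, …, 1` in the
reverse order in which they are first visited by a depth-first-search traversal of `T`
(modelled as a closed walk `p` from the root which visits every vertex and traverses each
edge at most twice; the first-visit order is recorded by `p.support.dedup`).  If `f k` is
the vertex labelled `k + 1`, then `∑_{i=1}^{d} dist(label i, label i+1) ≤ 2·d`. -/
theorem stmt4 {V : Type*} [Fintype V] [DecidableEq V] (G : SimpleGraph V)
    (hG : G.IsTree) (d : ℕ) (hcard : Fintype.card V = d + 1)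
    (f : Fin (d + 1) → V) (r : V) (p : G.Walk r r)
    (hedges : ∀ e : Sym2 V, p.edges.count e ≤ 2)
    (horder : p.support.dedup = (List.ofFn f).reverse) :
    ∑ i : Fin d, G.dist (f i.castSucc) (f i.succ) ≤ 2 * d := by
  classical
  have hlabels : (List.ofFn f).Sublist p.reverse.support := by
    rw [Walk.support_reverse, ← List.reverse_reverse (List.ofFn f), List.reverse_sublist,
      ← horder]
    exact List.dedup_sublist _
  have hedgeCount : #G.edgeFinset = d := by
    have := hG.card_edgeFinset
    omega
  calc ∑ i : Fin d, G.dist (f i.castSucc) (f i.succ)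
      = G.chainDist (List.ofFn f) := (chainDist_ofFn f).symm
    _ ≤ p.reverse.length := chainDist_le_length p.reverse hlabels
    _ = p.length := p.length_reverse
    _ ≤ 2 * d := hedgeCount ▸ p.length_le_mul_card_edgeFinset hedges
end

section
/- For any n ≥ 1, any angles θ(x) ∈ ℝ for x ∈ {0,1}^n \ {0^n}, there exist real coefficients α_s for s ∈ {0,1}^n \ {0^n} such that for every x ∈ {0,1}^n \ {0^n}, the sum over s of α_s · ⟨x, s⟩ equals θ(x), where ⟨x, s⟩ ∈ {0,1} denotes the F_2 inner product (viewed as a real number 0 or 1). -/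
open Finset

namespace Stmt7Aux

noncomputable def χ (a : ZMod 2) : ℝ := (-1 : ℝ) ^ a.val

lemma zmod2_cases (a : ZMod 2) : a = 0 ∨ a = 1 := by revert a; decide

lemma chi_zero : χ 0 = 1 := by simp [χ]

lemma chi_add (a b : ZMod 2) : χ (a + b) = χ a * χ b := by
  rcases zmod2_cases a with rfl | rfl <;> rcases zmod2_cases b with rfl | rfl <;>
    norm_num [χ, show ((1 : ZMod 2) + 1) = 0 from rfl,
      show ZMod.val (2 : ZMod 2) = 0 from by decide, ZMod.val_one]

lemma val_real (a : ZMod 2) : ((a.val : ℕ) : ℝ) = (1 - χ a) / 2 := by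
  rcases zmod2_cases a with rfl | rfl <;> norm_num [χ, ZMod.val_one]

variable {n : ℕ}

def ip (x s : Fin n → ZMod 2) : ZMod 2 := ∑ i, x i * s i

lemma ip_zero_left (s : Fin n → ZMod 2) : ip 0 s = 0 := by simp [ip]

lemma ip_add_left (x y s : Fin n → ZMod 2) : ip (x + y) s = ip x s + ip y s := by
  simp [ip, add_mul, Finset.sum_add_distrib]

lemma ip_add_right (x s t : Fin n → ZMod 2) : ip x (s + t) = ip x s + ip x t := by
  simp [ip, mul_add, Finset.sum_add_distrib]

lemma add_eq_zero_iff (x y : Fin n → ZMod 2) : x + y = 0 ↔ x = y := by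
  constructor
  · intro h
    funext j
    have hj := congrFun h j
    have : x j + y j = 0 := hj
    rcases zmod2_cases (x j) with hx | hx <;> rcases zmod2_cases (y j) with hy | hy <;>
      simp [hx, hy] at this ⊢ <;> exact absurd this (by decide)
  · rintro rfl
    funext j
    have : x j + x j = 0 := by rcases zmod2_cases (x j) with hx | hx <;> simp [hx] <;> decide
    exact this

lemma sum_chi_zero : ∑ s : Fin n → ZMod 2, χ (ip 0 s) = 2 ^ n := by
  simp [ip_zero_left, chi_zero, Finset.card_univ]

lemma sum_chi_ne (z : Fin n → ZMod 2) (hz : z ≠ 0) : ∑ s : Fin n → ZMod 2, χ (ip z s) = 0 := by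
  obtain ⟨i, hi⟩ : ∃ i, z i ≠ 0 := by
    by_contra h
    push_neg at h
    exact hz (funext h)
  have hzi : z i = 1 := (zmod2_cases (z i)).resolve_left hi
  set e : Fin n → ZMod 2 := fun j => if j = i then 1 else 0 with he
  have hipe : ip z e = 1 := by
    simp only [ip, he, mul_ite, mul_one, mul_zero]
    rw [Finset.sum_ite_eq' Finset.univ i z]
    simp [hzi]
  have h1 : ∑ s : Fin n → ZMod 2, χ (ip z (s + e)) = ∑ s : Fin n → ZMod 2, χ (ip z s) :=
    Fintype.sum_equiv (Equiv.addRight e) _ _ (fun s => rfl)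
  have h2 : ∀ s : Fin n → ZMod 2, χ (ip z (s + e)) = -χ (ip z s) := by
    intro s
    rw [ip_add_right, hipe, chi_add]
    simp [χ, ZMod.val_one]
  rw [Finset.sum_congr rfl (fun s _ => h2 s), Finset.sum_neg_distrib] at h1
  linarith

lemma sum_chi (z : Fin n → ZMod 2) :
    ∑ s : Fin n → ZMod 2, χ (ip z s) = if z = 0 then (2 : ℝ) ^ n else 0 := by
  by_cases hz : z = 0
  · subst hz; simp [sum_chi_zero]
  · simp [hz, sum_chi_ne z hz]

end Stmt7Aux

open Stmt7Aux

/-- For any `n ≥ 1` and any angles `θ(x) ∈ ℝ` for nonzero `x ∈ {0,1}^n`, there exist real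
coefficients `α_s` (for nonzero `s`) such that for every nonzero `x`,
`∑_{s ≠ 0} α_s · ⟨x, s⟩ = θ(x)`, where `⟨x, s⟩ ∈ {0, 1}` is the `F₂` inner product viewed
as a real number. -/
theorem stmt7 (n : ℕ) (hn : 1 ≤ n) (θ : (Fin n → ZMod 2) → ℝ) :
    ∃ α : (Fin n → ZMod 2) → ℝ,
      ∀ x : Fin n → ZMod 2, x ≠ 0 →
        ∑ s ∈ Finset.univ.filter fun s : Fin n → ZMod 2 => s ≠ 0,
          α s * (((∑ i, x i * s i : ZMod 2).val : ℕ) : ℝ) = θ x := by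
  classical
  set θ' : (Fin n → ZMod 2) → ℝ := fun x => if x = 0 then 0 else θ x with hθ'
  set α : (Fin n → ZMod 2) → ℝ :=
    fun s => -(2 / 2 ^ n) * ∑ y : Fin n → ZMod 2, θ' y * χ (ip y s) with hα
  have key : ∀ x : Fin n → ZMod 2, ∑ s : Fin n → ZMod 2, α s * χ (ip x s) = -2 * θ' x := by
    intro x
    have step1 : ∀ s : Fin n → ZMod 2,
        α s * χ (ip x s)
          = -(2 / 2 ^ n) * ∑ y : Fin n → ZMod 2, θ' y * χ (ip (y + x) s) := by
      intro s
      rw [hα]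
      simp only
      rw [mul_assoc, Finset.sum_mul]
      congr 1
      apply Finset.sum_congr rfl
      intro y _
      rw [ip_add_left, chi_add, mul_assoc]
    rw [Finset.sum_congr rfl (fun s _ => step1 s), ← Finset.mul_sum]
    rw [Finset.sum_comm]
    have step2 : ∀ y : Fin n → ZMod 2,
        ∑ s : Fin n → ZMod 2, θ' y * χ (ip (y + x) s)
          = if y = x then θ' y * 2 ^ n else 0 := by
      intro y
      rw [← Finset.mul_sum, sum_chi]
      by_cases h : y = x
      · subst h; simp [(add_eq_zero_iff y y).mpr rfl]
      · have hne : y + x ≠ 0 := fun hc => h ((add_eq_zero_iff y x).mp hc)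
        simp [hne, h]
    rw [Finset.sum_congr rfl (fun y _ => step2 y), Finset.sum_ite_eq' Finset.univ x]
    have h2n : (2 : ℝ) ^ n ≠ 0 := by positivity
    simp only [Finset.mem_univ, if_true]
    field_simp
  refine ⟨α, fun x hx => ?_⟩
  have hterm : ∀ s : Fin n → ZMod 2,
      α s * (((∑ i, x i * s i : ZMod 2).val : ℕ) : ℝ)
        = α s / 2 - α s * χ (ip x s) / 2 := by
    intro s
    rw [show (∑ i, x i * s i : ZMod 2) = ip x s from rfl, val_real]
    ring
  have hfull : ∑ s ∈ Finset.univ.filter (fun s : Fin n → ZMod 2 => s ≠ 0),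
      α s * (((∑ i, x i * s i : ZMod 2).val : ℕ) : ℝ)
        = ∑ s : Fin n → ZMod 2, α s * (((∑ i, x i * s i : ZMod 2).val : ℕ) : ℝ) := by
    apply Finset.sum_subset (Finset.filter_subset _ _)
    intro s _ hs
    simp only [Finset.mem_filter, Finset.mem_univ, true_and, not_not] at hs
    subst hs
    have : ip x 0 = 0 := by simp [ip]
    rw [show (∑ i, x i * (0 : Fin n → ZMod 2) i : ZMod 2) = ip x 0 from rfl, this]
    simp
  have hsum0 : ∑ s : Fin n → ZMod 2, α s = 0 := by
    have h := key 0
    simp only [ip_zero_left, chi_zero, mul_one] at h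
    simpa [hθ'] using h
  rw [hfull, Finset.sum_congr rfl (fun s _ => hterm s), Finset.sum_sub_distrib,
    ← Finset.sum_div, ← Finset.sum_div, hsum0, key x]
  have : θ' x = θ x := by simp [hθ', hx]
  rw [← this]
  ring
end

section
/- Let n_1 ≥ n_2 ≥ ··· ≥ n_d ≥ 1 be integers and n ≥ 1. Suppose n_{d-j+2}, ..., n_d satisfy n_{d-i} < 2^{n/(d-i+1)} / (n_{d-i+1}···n_d)^{1/(d-i+1)} for i ∈ [j-2] (for some 2 ≤ j ≤ d). Then for every k ∈ {d-j+3, ..., d}: 2^{n/(d-j+2)} / (n_{d-j+2}···n_d)^{1/(d-j+2)} ≥ 2^{n/k} / (n_k···n_d)^{1/k}. -/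
/-- One step of the descent: if `am < (2^n / Pm)^(1/m)` then
`(2^n/Pm)^(1/m) ≤ (2^n/(am*Pm))^(1/(m-1))`. -/
lemma stmt12_aux (n : ℕ) (M Pm am : ℝ) (hM : 2 ≤ M) (hPm : 0 < Pm) (ham : 0 < am)
    (hlt : am < (2 : ℝ) ^ ((n : ℝ) / M) / Pm ^ ((1 : ℝ) / M)) :
    (2 : ℝ) ^ ((n : ℝ) / M) / Pm ^ ((1 : ℝ) / M) ≤
      (2 : ℝ) ^ ((n : ℝ) / (M - 1)) / (am * Pm) ^ ((1 : ℝ) / (M - 1)) := by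
  have hM0 : (0 : ℝ) < M := by linarith
  have hM1 : (0 : ℝ) < M - 1 := by linarith
  set g : ℝ := (2 : ℝ) ^ (n : ℝ) / Pm with hg
  have hgpos : 0 < g := by
    apply div_pos _ hPm
    exact Real.rpow_pos_of_pos (by norm_num) _
  have h1 : (2 : ℝ) ^ ((n : ℝ) / M) / Pm ^ ((1 : ℝ) / M) = g ^ ((1 : ℝ) / M) := by
    rw [hg, Real.div_rpow (by positivity) hPm.le, ← Real.rpow_mul (by norm_num), mul_one_div]
  have h2 : (2 : ℝ) ^ ((n : ℝ) / (M - 1)) / (am * Pm) ^ ((1 : ℝ) / (M - 1))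
      = (g / am) ^ ((1 : ℝ) / (M - 1)) := by
    have : g / am = (2 : ℝ) ^ (n : ℝ) / (am * Pm) := by
      rw [hg]; field_simp
    rw [this, Real.div_rpow (by positivity) (by positivity),
      ← Real.rpow_mul (by norm_num), mul_one_div]
  rw [h1, h2]
  have hlt' : am < g ^ ((1 : ℝ) / M) := by rw [← h1]; exact hlt
  have hkey : g ^ ((M - 1) / M) ≤ g / am := by
    have hstep : g / g ^ ((1 : ℝ) / M) ≤ g / am := by
      gcongr
      all_goals exact hlt'.le  -- may be closed by gcongr already
    have heq : g / g ^ ((1 : ℝ) / M) = g ^ ((M - 1) / M) := by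
      rw [show (M - 1) / M = 1 - 1 / M by field_simp,
        Real.rpow_sub hgpos, Real.rpow_one]
    linarith [heq ▸ hstep]
  calc g ^ ((1 : ℝ) / M) = (g ^ ((M - 1) / M)) ^ ((1 : ℝ) / (M - 1)) := by
        rw [← Real.rpow_mul hgpos.le]
        congr 1
        field_simp
    _ ≤ (g / am) ^ ((1 : ℝ) / (M - 1)) :=
        Real.rpow_le_rpow (by positivity) hkey (by positivity)

/-- Let `n_1 ≥ n_2 ≥ ⋯ ≥ n_d ≥ 1` be integers and `n ≥ 1`.  Suppose, for some
`2 ≤ j ≤ d`, that `n_{d-i} < 2^{n/(d-i+1)}/(n_{d-i+1}⋯n_d)^{1/(d-i+1)}` for all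
`i ∈ [j-2]`.  Then for every `k ∈ {d-j+3, …, d}`:
`2^{n/(d-j+2)}/(n_{d-j+2}⋯n_d)^{1/(d-j+2)} ≥ 2^{n/k}/(n_k⋯n_d)^{1/k}`. -/
theorem stmt12 (d j n : ℕ) (hj2 : 2 ≤ j) (hjd : j ≤ d) (hn : 1 ≤ n)
    (a : ℕ → ℕ) (hpos : ∀ i, 1 ≤ i → i ≤ d → 1 ≤ a i)
    (hmono : ∀ i i', 1 ≤ i → i ≤ i' → i' ≤ d → a i' ≤ a i)
    (hhyp : ∀ i, 1 ≤ i → i ≤ j - 2 →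
      (a (d - i) : ℝ) < (2 : ℝ) ^ ((n : ℝ) / ((d : ℝ) - (i : ℝ) + 1)) /
        (∏ t ∈ Finset.Icc (d - i + 1) d, (a t : ℝ)) ^ ((1 : ℝ) / ((d : ℝ) - (i : ℝ) + 1))) :
    ∀ k, d - j + 3 ≤ k → k ≤ d →
      (2 : ℝ) ^ ((n : ℝ) / (k : ℝ)) /
          (∏ t ∈ Finset.Icc k d, (a t : ℝ)) ^ ((1 : ℝ) / (k : ℝ)) ≤
        (2 : ℝ) ^ ((n : ℝ) / ((d : ℝ) - (j : ℝ) + 2)) /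
          (∏ t ∈ Finset.Icc (d - j + 2) d, (a t : ℝ)) ^ ((1 : ℝ) / ((d : ℝ) - (j : ℝ) + 2)) := by
  set P : ℕ → ℝ := fun k => ∏ t ∈ Finset.Icc k d, (a t : ℝ) with hP
  set f : ℕ → ℝ := fun k => (2 : ℝ) ^ ((n : ℝ) / (k : ℝ)) / P k ^ ((1 : ℝ) / (k : ℝ)) with hf
  have hPpos : ∀ k, 1 ≤ k → 0 < P k := by
    intro k hk
    apply Finset.prod_pos
    intro t ht
    simp only [Finset.mem_Icc] at ht
    exact_mod_cast hpos t (le_trans hk ht.1) ht.2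
  have hPsplit : ∀ k, 1 ≤ k → k ≤ d → P k = (a k : ℝ) * P (k + 1) := by
    intro k _ hk
    simp only [hP, ← Finset.Ico_add_one_right_eq_Icc]
    rw [Finset.prod_eq_prod_Ico_succ_bot (by omega)]
  -- main descent: f k ≤ f (d - j + 2) for d - j + 2 ≤ k ≤ d
  have main : ∀ k, d - j + 2 ≤ k → k ≤ d → f k ≤ f (d - j + 2) := by
    intro k hk1
    induction k, hk1 using Nat.le_induction with
    | base => intro _; exact le_refl _
    | succ k hk ih =>
      intro hkd
      have hk1 : 1 ≤ k := by omega
      have hkd' : k ≤ d := by omega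
      have hstep : f (k + 1) ≤ f k := by
        -- use hhyp at i = d - k
        have hi1 : 1 ≤ d - k := by omega
        have hi2 : d - k ≤ j - 2 := by omega
        have h := hhyp (d - k) hi1 hi2
        have hcast : ((d : ℝ) - ((d - k : ℕ) : ℝ) + 1) = ((k : ℝ) + 1) := by
          rw [Nat.cast_sub hkd']; ring
        rw [show d - (d - k) = k by omega] at h
        rw [hcast] at h
        have hapos : (0 : ℝ) < (a k : ℝ) := by
          exact_mod_cast hpos k hk1 hkd'
        have hPk1 : 0 < P (k + 1) := hPpos (k + 1) (by omega)
        have haux := stmt12_aux n ((k : ℝ) + 1) (P (k + 1)) (a k)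
          (by have h1 : (1:ℝ) ≤ (k:ℝ) := by exact_mod_cast hk1
              linarith)
          hPk1 hapos (by simpa only [hP] using h)
        -- rewrite f (k+1) and f k
        have e1 : f (k + 1) = (2 : ℝ) ^ ((n : ℝ) / ((k : ℝ) + 1)) /
            P (k + 1) ^ ((1 : ℝ) / ((k : ℝ) + 1)) := by
          simp only [hf]; push_cast; ring_nf
        have e2 : f k = (2 : ℝ) ^ ((n : ℝ) / (((k : ℝ) + 1) - 1)) /
            ((a k : ℝ) * P (k + 1)) ^ ((1 : ℝ) / (((k : ℝ) + 1) - 1)) := by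
          simp only [hf, hPsplit k hk1 hkd']
          norm_num
        rw [e1, e2]
        exact haux
      exact hstep.trans (ih hkd')
  intro k hk1 hk2
  have hbase : ((d - j + 2 : ℕ) : ℝ) = (d : ℝ) - (j : ℝ) + 2 := by
    push_cast [Nat.cast_sub hjd]; ring
  have := main k (by omega) hk2
  simp only [hf, hP, hbase] at this
  exact this
end

section
/- Any n-qubit uniformly controlled gate V_n = diag(U_1, ..., U_{2^{n-1}}) with each U_i ∈ U(2) can be decomposed as V_n = Λ'''·(I_{2^{n-1}} ⊗ SH)·Λ''·(I_{2^{n-1}} ⊗ HS†)·Λ', where Λ', Λ'', Λ''' are 2^n × 2^n diagonal unitary matrices, S = diag(1, i), and H is the Hadamard matrix. -/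
open Matrix Kronecker

/-- The phase gate `S = diag(1, i)`. -/
noncomputable def gateS : Matrix (Fin 2) (Fin 2) ℂ := !![1, 0; 0, Complex.I]

/-- The Hadamard gate `H = (1/√2)[[1,1],[1,-1]]`. -/
noncomputable def gateH : Matrix (Fin 2) (Fin 2) ℂ :=
  ((1 / Real.sqrt 2 : ℝ) : ℂ) • !![1, 1; 1, -1]

/-!
Conjugating a diagonal matrix `diag(a, b)` by `SH` gives `½ [[a + b, i(b - a)], [i(a - b), a + b]]`,
which for `a = c - is`, `b = c + is` is the real rotation `[[c, -s], [s, c]]`. Every `U ∈ U(2)` is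
a rotation between two diagonal unitaries: from `adj U = det U • Uᴴ` it has the form
`[[u, v], [-δ v̄, δ ū]]` with `|δ| = 1`, and writing `u = |u| p`, `v = |v| q` with unit phases `p, q`
gives `U = diag(p, -δ q̄) · R(|u|, |v|) · diag(1, -q p̄)`. A uniformly controlled gate is
block diagonal, and so are `I ⊗ A` and diagonal matrices, so the decomposition is blockwise.
-/

open Complex ComplexConjugate

namespace Matrix

variable {ι m n α : Type*}

theorem adjugate_eq_det_smul_star_of_mem_unitaryGroup [Fintype m] [DecidableEq m] [CommRing α]
    [StarRing α] {A : Matrix m m α} (hA : A ∈ unitaryGroup m α) :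
    adjugate A = A.det • star A := by
  calc adjugate A = star A * A * adjugate A := by
        rw [(mem_unitaryGroup_iff').mp hA, Matrix.one_mul]
    _ = A.det • star A := by
        rw [Matrix.mul_assoc, mul_adjugate, Matrix.mul_smul, Matrix.mul_one]

theorem exists_diagonal_mul_rotation_mul_diagonal_of_mem_unitaryGroup
    {U : Matrix (Fin 2) (Fin 2) ℂ} (hU : U ∈ unitaryGroup (Fin 2) ℂ) :
    ∃ (d₁ d₃ : Fin 2 → ℂ) (c s : ℝ), (∀ k, ‖d₁ k‖ = 1) ∧ (∀ k, ‖d₃ k‖ = 1) ∧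
      c ^ 2 + s ^ 2 = 1 ∧ U = diagonal d₃ * !![(c : ℂ), -s; s, c] * diagonal d₁ := by
  set δ := U.det
  have hadj := adjugate_eq_det_smul_star_of_mem_unitaryGroup hU
  rw [adjugate_fin_two] at hadj
  have h10 : -U 1 0 = δ * conj (U 0 1) := by simpa using congrFun (congrFun hadj 1) 0
  have h11 : U 1 1 = δ * conj (U 0 0) := by simpa using congrFun (congrFun hadj 0) 0
  have hδ : ‖δ‖ = 1 := CStarRing.norm_of_mem_unitary (det_of_mem_unitary hU)
  have hrow : ‖U 0 0‖ ^ 2 + ‖U 0 1‖ ^ 2 = 1 := by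
    have h := congrFun (congrFun ((mem_unitaryGroup_iff).mp hU) 0) 0
    simp only [mul_apply, Fin.sum_univ_two, star_apply, RCLike.star_def, mul_conj,
      normSq_eq_norm_sq, one_apply_eq] at h
    exact_mod_cast h
  set p := exp (arg (U 0 0) * I)
  set q := exp (arg (U 0 1) * I)
  have hp : ‖p‖ = 1 := norm_exp_ofReal_mul_I _
  have hq : ‖q‖ = 1 := norm_exp_ofReal_mul_I _
  have hpp : p * conj p = 1 := by rw [mul_conj, normSq_eq_norm_sq, hp]; norm_num
  have hqq : q * conj q = 1 := by rw [mul_conj, normSq_eq_norm_sq, hq]; norm_num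
  have hu : U 0 0 = ‖U 0 0‖ * p := (norm_mul_exp_arg_mul_I _).symm
  have hv : U 0 1 = ‖U 0 1‖ * q := (norm_mul_exp_arg_mul_I _).symm
  have hu' : conj (U 0 0) = ‖U 0 0‖ * conj p := by conv_lhs => rw [hu, map_mul, conj_ofReal]
  have hv' : conj (U 0 1) = ‖U 0 1‖ * conj q := by conv_lhs => rw [hv, map_mul, conj_ofReal]
  refine ⟨![1, -(q * conj p)], ![p, -(δ * conj q)], ‖U 0 0‖, ‖U 0 1‖, ?_, ?_, hrow, ?_⟩
  · intro k; fin_cases k <;> simp [hp, hq]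
  · intro k; fin_cases k <;> simp [hp, hq, hδ]
  · rw [eta_fin_two U, diagonal_fin_two, diagonal_fin_two, mul_fin_two, mul_fin_two]
    ext i j; fin_cases i <;> fin_cases j <;> simp
    · linear_combination hu
    · linear_combination hv - ‖U 0 1‖ * q * hpp
    · linear_combination -h10 - δ * hv'
    · linear_combination h11 + δ * hu' - δ * ‖U 0 0‖ * conj p * hqq

theorem of_ite_fst_eq_eq_reindex_blockDiagonal [DecidableEq ι] [Zero α] (M : ι → Matrix m n α) :
    (of fun (p : ι × m) (q : ι × n) => if p.1 = q.1 then M p.1 p.2 q.2 else 0) =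
      reindex (Equiv.prodComm m ι) (Equiv.prodComm n ι) (blockDiagonal M) := by
  ext ⟨i, k⟩ ⟨j, l⟩
  simp [blockDiagonal_apply]

theorem diagonal_eq_reindex_blockDiagonal [DecidableEq ι] [DecidableEq m] [Zero α]
    (f : ι × m → α) :
    diagonal f = reindex (Equiv.prodComm m ι) (Equiv.prodComm m ι)
      (blockDiagonal fun i => diagonal fun k => f (i, k)) := by
  rw [blockDiagonal_diagonal, reindex_apply, submatrix_diagonal_equiv]
  rfl

theorem one_kronecker_eq_reindex_blockDiagonal [DecidableEq ι] [Semiring α] (A : Matrix m n α) :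
    (1 : Matrix ι ι α) ⊗ₖ A =
      reindex (Equiv.prodComm m ι) (Equiv.prodComm n ι) (blockDiagonal fun _ => A) := by
  rw [← diagonal_one, diagonal_kronecker]
  simp only [one_smul]

end Matrix

theorem gateS_conjTranspose : gateSᴴ = !![1, 0; 0, -I] := by
  ext i j; fin_cases i <;> fin_cases j <;> simp [gateS]

theorem gateS_mul_gateH : gateS * gateH = ((1 / √2 : ℝ) : ℂ) • !![1, 1; I, -I] := by
  simp [gateS, gateH, mul_comm]

theorem gateH_mul_gateS_conjTranspose :
    gateH * gateSᴴ = ((1 / √2 : ℝ) : ℂ) • !![1, -I; 1, I] := by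
  simp [gateS_conjTranspose, gateH]

theorem gateS_mul_gateH_mul_diagonal_mul_gateH_mul_gateS_conjTranspose (a b : ℂ) :
    gateS * gateH * diagonal ![a, b] * (gateH * gateSᴴ) =
      !![(a + b) / 2, I * (b - a) / 2; I * (a - b) / 2, (a + b) / 2] := by
  have h2 : ((1 / √2 : ℝ) : ℂ) * ((1 / √2 : ℝ) : ℂ) = 1 / 2 := by
    rw [← ofReal_mul, div_mul_div_comm, Real.mul_self_sqrt zero_le_two]; norm_num
  rw [gateS_mul_gateH, gateH_mul_gateS_conjTranspose, diagonal_fin_two, smul_mul, smul_mul,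
    Matrix.mul_smul, smul_smul, h2, mul_fin_two, mul_fin_two, smul_of]
  ext i j
  fin_cases i <;> fin_cases j <;> simp
  · ring
  · ring
  · ring
  · linear_combination -(a + b) / 2 * I_sq

theorem rotation_eq_gateS_mul_gateH_mul_diagonal_mul_gateH_mul_gateS_conjTranspose (c s : ℝ) :
    !![(c : ℂ), -s; s, c] =
      gateS * gateH * diagonal ![c - s * I, c + s * I] * (gateH * gateSᴴ) := by
  rw [gateS_mul_gateH_mul_diagonal_mul_gateH_mul_gateS_conjTranspose]
  ext i j
  fin_cases i <;> fin_cases j <;> simp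
  · linear_combination -s * I_sq
  · linear_combination s * I_sq

theorem exists_diagonal_decomposition_of_mem_unitaryGroup_fin_two
    {U : Matrix (Fin 2) (Fin 2) ℂ} (hU : U ∈ unitaryGroup (Fin 2) ℂ) :
    ∃ d₁ d₂ d₃ : Fin 2 → ℂ, (∀ k, ‖d₁ k‖ = 1) ∧ (∀ k, ‖d₂ k‖ = 1) ∧ (∀ k, ‖d₃ k‖ = 1) ∧
      U = diagonal d₃ * (gateS * gateH) * diagonal d₂ * (gateH * gateSᴴ) * diagonal d₁ := by
  obtain ⟨d₁, d₃, c, s, hd₁, hd₃, hcs, rfl⟩ :=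
    exists_diagonal_mul_rotation_mul_diagonal_of_mem_unitaryGroup hU
  have hnorm (t : ℝ) (ht : t ^ 2 = s ^ 2) : ‖(c : ℂ) + t * I‖ = 1 := by
    rw [norm_add_mul_I, ht, hcs, Real.sqrt_one]
  refine ⟨d₁, ![c - s * I, c + s * I], d₃, hd₁, ?_, hd₃, ?_⟩
  · intro k
    fin_cases k
    · simpa [sub_eq_add_neg] using hnorm (-s) (neg_sq s)
    · exact hnorm s rfl
  · rw [rotation_eq_gateS_mul_gateH_mul_diagonal_mul_gateH_mul_gateS_conjTranspose]
    simp only [Matrix.mul_assoc]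

theorem stmt15_general (n : ℕ)
    (U : Fin (2 ^ (n - 1)) → Matrix (Fin 2) (Fin 2) ℂ)
    (hU : ∀ i, U i ∈ Matrix.unitaryGroup (Fin 2) ℂ) :
    ∃ f₁ f₂ f₃ : Fin (2 ^ (n - 1)) × Fin 2 → ℂ,
      (∀ z, ‖f₁ z‖ = 1) ∧ (∀ z, ‖f₂ z‖ = 1) ∧ (∀ z, ‖f₃ z‖ = 1) ∧
      (Matrix.of fun p q : Fin (2 ^ (n - 1)) × Fin 2 =>
          if p.1 = q.1 then U p.1 p.2 q.2 else 0) =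
        Matrix.diagonal f₃ *
          ((1 : Matrix (Fin (2 ^ (n - 1))) (Fin (2 ^ (n - 1))) ℂ) ⊗ₖ (gateS * gateH)) *
          Matrix.diagonal f₂ *
          ((1 : Matrix (Fin (2 ^ (n - 1))) (Fin (2 ^ (n - 1))) ℂ) ⊗ₖ (gateH * gateSᴴ)) *
          Matrix.diagonal f₁ := by
  choose d₁ d₂ d₃ hd₁ hd₂ hd₃ hUd using
    fun i => exists_diagonal_decomposition_of_mem_unitaryGroup_fin_two (hU i)
  refine ⟨fun p => d₁ p.1 p.2, fun p => d₂ p.1 p.2, fun p => d₃ p.1 p.2,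
    fun p => hd₁ _ _, fun p => hd₂ _ _, fun p => hd₃ _ _, ?_⟩
  simp only [of_ite_fst_eq_eq_reindex_blockDiagonal, diagonal_eq_reindex_blockDiagonal,
    one_kronecker_eq_reindex_blockDiagonal, reindex_apply, submatrix_mul_equiv,
    ← blockDiagonal_mul]
  congr 2
  exact funext hUd

/-- Any `n`-qubit uniformly controlled gate `V_n = diag(U_1, …, U_{2^{n-1}})` with each
`U_i ∈ U(2)` decomposes as `V_n = Λ''' · (I ⊗ SH) · Λ'' · (I ⊗ HS†) · Λ'` with
`Λ', Λ'', Λ'''` diagonal unitary `2^n × 2^n` matrices. -/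
theorem stmt15 (n : ℕ) (hn : 1 ≤ n)
    (U : Fin (2 ^ (n - 1)) → Matrix (Fin 2) (Fin 2) ℂ)
    (hU : ∀ i, U i ∈ Matrix.unitaryGroup (Fin 2) ℂ) :
    ∃ f₁ f₂ f₃ : Fin (2 ^ (n - 1)) × Fin 2 → ℂ,
      (∀ z, ‖f₁ z‖ = 1) ∧ (∀ z, ‖f₂ z‖ = 1) ∧ (∀ z, ‖f₃ z‖ = 1) ∧
      (Matrix.of fun p q : Fin (2 ^ (n - 1)) × Fin 2 =>
          if p.1 = q.1 then U p.1 p.2 q.2 else 0) =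
        Matrix.diagonal f₃ *
          ((1 : Matrix (Fin (2 ^ (n - 1))) (Fin (2 ^ (n - 1))) ℂ) ⊗ₖ (gateS * gateH)) *
          Matrix.diagonal f₂ *
          ((1 : Matrix (Fin (2 ^ (n - 1))) (Fin (2 ^ (n - 1))) ℂ) ⊗ₖ (gateH * gateSᴴ)) *
          Matrix.diagonal f₁ :=
  stmt15_general n U hU
end
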